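/- arXiv:1506.08000 — 4 statements merged into one kernel-verified Lean document; each statement's English description precedes it below -/
import Mathlib

section
/- If a, b, c are positive reals with a + b + c < π/2, then cos b + cos c > cos a + sin a. -/
open Real
theorem stmt0 (a b c : ℝ) (ha : 0 < a) (hb : 0 < b) (hc : 0 < c)
    (h : a + b + c < π / 2) :
    Real.cos a + Real.sin a < Real.cos b + Real.cos c := by
  have hpi := Real.pi_pos
  -- cos b + cos c = 2 cos((b+c)/2) cos((b-c)/2)
  have hsum : Real.cos b + Real.cos c
      = 2 * Real.cos ((b + c) / 2) * Real.cos ((b - c) / 2) := by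
    have := Real.cos_add_cos b c
    linarith
  have h1 : Real.cos ((b + c) / 2) ≤ Real.cos ((b - c) / 2) := by
    rw [← Real.cos_abs ((b - c) / 2)]
    apply Real.cos_le_cos_of_nonneg_of_le_pi (abs_nonneg _) (by linarith)
    rw [abs_le]; constructor <;> linarith
  have hcpos : 0 < Real.cos ((b + c) / 2) := by
    apply Real.cos_pos_of_mem_Ioo
    constructor <;> [linarith; linarith]
  have key : 1 + Real.cos (b + c) ≤ Real.cos b + Real.cos c := by
    have hd := Real.cos_sq ((b + c) / 2)
    have he : 2 * ((b + c) / 2) = b + c := by ring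
    rw [he] at hd
    rw [hsum]
    nlinarith [h1, hcpos]
  have h2 : Real.sin a < Real.cos (b + c) := by
    rw [← Real.cos_pi_div_two_sub a]
    apply Real.cos_lt_cos_of_nonneg_of_le_pi (by linarith) (by linarith) (by linarith)
  have h3 : Real.cos a < 1 := by
    have := Real.cos_lt_cos_of_nonneg_of_le_pi (le_refl 0) (le_of_lt (by linarith : a < π)) ha
    simpa using this
  linarith
end

section
/- For all positive reals a and d, sinh(a + d) / (sinh a + sinh d) < 1 + sqrt(sinh a · sinh d). -/
open Real
theorem stmt3 (a d : ℝ) (ha : 0 < a) (hd : 0 < d) :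
    Real.sinh (a + d) / (Real.sinh a + Real.sinh d)
      < 1 + Real.sqrt (Real.sinh a * Real.sinh d) := by
  have hs : 0 < Real.sinh a := Real.sinh_pos_iff.2 ha
  have ht : 0 < Real.sinh d := Real.sinh_pos_iff.2 hd
  have hca : Real.cosh a - 1 < Real.sinh a := by
    have := Real.cosh_sub_sinh a
    have h1 : Real.exp (-a) < 1 := Real.exp_lt_one_iff.2 (by linarith)
    linarith
  have hcd : Real.cosh d - 1 < Real.sinh d := by
    have := Real.cosh_sub_sinh d
    have h1 : Real.exp (-d) < 1 := Real.exp_lt_one_iff.2 (by linarith)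
    linarith
  set sq := Real.sqrt (Real.sinh a * Real.sinh d) with hsq
  have hsq2 : sq ^ 2 = Real.sinh a * Real.sinh d :=
    Real.sq_sqrt (by positivity)
  have hsq0 : 0 ≤ sq := Real.sqrt_nonneg _
  have h2 : 2 * sq ≤ Real.sinh a + Real.sinh d := by
    nlinarith [sq_nonneg (Real.sinh a - Real.sinh d)]
  rw [div_lt_iff₀ (by linarith), Real.sinh_add]
  nlinarith [mul_lt_mul_of_pos_left hcd hs, mul_lt_mul_of_pos_left hca ht,
    mul_le_mul_of_nonneg_left h2 hsq0]
end

section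
/- For all positive reals a and d, sinh((a + d)/2) + sinh(|a − d|/2) ≥ sinh((a + d)/2) / cosh((a − d)/2), with equality if and only if a = d. -/
open Real
theorem stmt9 (a d : ℝ) (ha : 0 < a) (hd : 0 < d) :
    Real.sinh ((a + d) / 2) / Real.cosh ((a - d) / 2)
      ≤ Real.sinh ((a + d) / 2) + Real.sinh (|a - d| / 2) ∧
    (Real.sinh ((a + d) / 2) + Real.sinh (|a - d| / 2)
      = Real.sinh ((a + d) / 2) / Real.cosh ((a - d) / 2) ↔ a = d) := by
  have hs : 0 < Real.sinh ((a + d) / 2) := Real.sinh_pos_iff.2 (by linarith)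
  have hc : 1 ≤ Real.cosh ((a - d) / 2) := Real.one_le_cosh _
  have hdiv : Real.sinh ((a + d) / 2) / Real.cosh ((a - d) / 2)
      ≤ Real.sinh ((a + d) / 2) := div_le_self hs.le hc
  have hsn : 0 ≤ Real.sinh (|a - d| / 2) :=
    Real.sinh_nonneg_iff.2 (by positivity)
  constructor
  · linarith
  · constructor
    · intro h
      have h1 : Real.sinh (|a - d| / 2) ≤ 0 := by linarith
      have h2 : |a - d| / 2 ≤ 0 := by
        by_contra hp
        push_neg at hp
        exact absurd (Real.sinh_pos_iff.2 hp) (by linarith)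
      have h3 : |a - d| = 0 := le_antisymm (by linarith) (abs_nonneg _)
      have := abs_eq_zero.1 h3
      linarith
    · intro h
      subst h
      simp
end

section
/- For all positive reals a, d and all θ ∈ (0, π), if cosh(2b) = cosh a cosh d − sinh a sinh d cos θ and cosh(2c) = cosh a cosh d + sinh a sinh d cos θ for some b, c ≥ 0, then sinh b + sinh c > sinh((a + d)/2) / cosh((a − d)/2). -/
open Real
theorem stmt10 (a d θ b c : ℝ) (ha : 0 < a) (hd : 0 < d)
    (hθ : 0 < θ) (hθ' : θ < π) (hb : 0 ≤ b) (hc : 0 ≤ c)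
    (hb' : Real.cosh (2 * b) = Real.cosh a * Real.cosh d - Real.sinh a * Real.sinh d * Real.cos θ)
    (hc' : Real.cosh (2 * c) = Real.cosh a * Real.cosh d + Real.sinh a * Real.sinh d * Real.cos θ) :
    Real.sinh b + Real.sinh c > Real.sinh ((a + d) / 2) / Real.cosh ((a - d) / 2) := by
  have hS : 0 < Real.sinh a * Real.sinh d :=
    mul_pos (Real.sinh_pos_iff.2 ha) (Real.sinh_pos_iff.2 hd)
  have ht1 : Real.cos θ < 1 := by
    have := Real.cos_lt_cos_of_nonneg_of_le_pi le_rfl hθ'.le hθ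
    simpa using this
  have ht2 : -1 < Real.cos θ := by
    have := Real.cos_lt_cos_of_nonneg_of_le_pi hθ.le le_rfl hθ'
    simpa using this
  have hsub : Real.cosh (a - d) = Real.cosh a * Real.cosh d - Real.sinh a * Real.sinh d :=
    Real.cosh_sub a d
  have hadd : Real.cosh (a + d) = Real.cosh a * Real.cosh d + Real.sinh a * Real.sinh d :=
    Real.cosh_add a d
  have hq : (1:ℝ) ≤ Real.cosh (a - d) := Real.one_le_cosh _
  have hp : (1:ℝ) ≤ Real.cosh (a + d) := Real.one_le_cosh _
  have hb2 : Real.sinh b ^ 2 = (Real.cosh (2 * b) - 1) / 2 := by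
    have h1 := Real.cosh_two_mul b
    have h2 := Real.cosh_sq b
    linarith
  have hc2 : Real.sinh c ^ 2 = (Real.cosh (2 * c) - 1) / 2 := by
    have h1 := Real.cosh_two_mul c
    have h2 := Real.cosh_sq c
    linarith
  have hbpos : 0 < Real.sinh b := by
    have h0 : 0 ≤ Real.sinh b := Real.sinh_nonneg_iff.2 hb
    have hsq : 0 < Real.sinh b ^ 2 := by
      rw [hb2, hb']
      nlinarith [mul_pos hS (sub_pos.2 ht1)]
    nlinarith
  have hcpos : 0 < Real.sinh c := by
    have h0 : 0 ≤ Real.sinh c := Real.sinh_nonneg_iff.2 hc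
    have hsq : 0 < Real.sinh c ^ 2 := by
      rw [hc2, hc']
      nlinarith [mul_pos hS (by linarith : (0:ℝ) < 1 + Real.cos θ)]
    nlinarith
  -- RHS facts
  have hu : Real.sinh ((a + d) / 2) ^ 2 = (Real.cosh (a + d) - 1) / 2 := by
    have h2 : 2 * ((a + d) / 2) = a + d := by ring
    have h3 := Real.cosh_two_mul ((a + d) / 2)
    have h4 := Real.cosh_sq ((a + d) / 2)
    rw [h2] at h3
    linarith
  have hv : Real.cosh ((a - d) / 2) ^ 2 = (Real.cosh (a - d) + 1) / 2 := by
    have h2 : 2 * ((a - d) / 2) = a - d := by ring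
    have h3 := Real.cosh_two_mul ((a - d) / 2)
    have h4 := Real.cosh_sq ((a - d) / 2)
    rw [h2] at h3
    linarith
  set R := Real.sinh ((a + d) / 2) / Real.cosh ((a - d) / 2) with hR
  have hvpos : 0 < Real.cosh ((a - d) / 2) := Real.cosh_pos ((a - d) / 2)
  have hR0 : 0 ≤ R := div_nonneg (Real.sinh_nonneg_iff.2 (by linarith)) hvpos.le
  have hR2 : R ^ 2 * Real.cosh ((a - d) / 2) ^ 2 = Real.sinh ((a + d) / 2) ^ 2 := by
    rw [hR, div_pow]
    field_simp
  have hkey : R ^ 2 ≤ Real.cosh a * Real.cosh d - 1 := by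
    rw [hu, hv] at hR2
    nlinarith [sq_nonneg R, mul_nonneg (sub_nonneg.2 hq) (by linarith : (0:ℝ) ≤ Real.cosh (a + d) + Real.cosh (a - d))]
  have hLsq : R ^ 2 < (Real.sinh b + Real.sinh c) ^ 2 := by
    have : Real.sinh b ^ 2 + Real.sinh c ^ 2 = Real.cosh a * Real.cosh d - 1 := by
      rw [hb2, hc2, hb', hc']; ring
    have hex : (Real.sinh b + Real.sinh c) ^ 2
        = Real.sinh b ^ 2 + Real.sinh c ^ 2 + 2 * (Real.sinh b * Real.sinh c) := by ring
    have hbc := mul_pos hbpos hcpos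
    linarith
  by_contra h
  push_neg at h
  have := pow_le_pow_left₀ (by linarith : (0:ℝ) ≤ Real.sinh b + Real.sinh c) h 2
  linarith
end
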